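/- arXiv:2604.03775 — 2 statements merged into one kernel-verified Lean document; each statement's English description precedes it below -/
import Mathlib

section
/- For real a, b with |a| < 1 and |b| < 1, (1/2π) ∫_{−π}^{π} [2(cos ω − a)] / [(1 + a² − 2a cos ω)(1 + b² − 2b cos ω)] dω = 2b / ((1 − ab)(1 − b²)). -/
/-!
Write `P_r(ω) = 1 + r² - 2 r cos ω = |1 - r e^{iω}|²`. The argument of `e^{iω} / (1 - r e^{iω})`,
namely `ω + 2 arctan (r sin ω / (1 - r cos ω))`, is a primitive of the Poisson kernel
`(1 - r²) / P_r`, whence `∫_{-π}^{π} dω / P_r = 2π / (1 - r²)`. For `a ≠ b` the integrand is, by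
partial fractions in `cos ω`, a linear combination of `1 / P_a` and `1 / P_b`; for `a = b` it is a
multiple of `1 / P_a` plus a multiple of the derivative of the periodic function `sin ω / P_a`.
-/

open Real intervalIntegral

lemma mul_cos_le_abs (r ω : ℝ) : r * cos ω ≤ |r| :=
  (le_abs_self _).trans <| by
    simpa [abs_mul] using mul_le_of_le_one_right (abs_nonneg r) (abs_cos_le_one ω)

lemma one_add_sq_sub_two_mul_mul_cos_pos {r : ℝ} (hr : |r| < 1) (ω : ℝ) :
    0 < 1 + r ^ 2 - 2 * r * cos ω := by
  nlinarith [mul_cos_le_abs r ω, sq_abs r, abs_nonneg r]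

lemma continuous_inv_one_add_sq_sub_two_mul_mul_cos {r : ℝ} (hr : |r| < 1) :
    Continuous fun ω => (1 + r ^ 2 - 2 * r * cos ω)⁻¹ :=
  (by fun_prop : Continuous fun ω => 1 + r ^ 2 - 2 * r * cos ω).inv₀
    fun ω => (one_add_sq_sub_two_mul_mul_cos_pos hr ω).ne'

lemma hasDerivAt_poisson_primitive {r : ℝ} (hr : |r| < 1) (ω : ℝ) :
    HasDerivAt (fun x => x + 2 * arctan (r * sin x / (1 - r * cos x)))
      ((1 - r ^ 2) / (1 + r ^ 2 - 2 * r * cos ω)) ω := by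
  have hD : 0 < 1 - r * cos ω := by linarith [mul_cos_le_abs r ω]
  have hP := one_add_sq_sub_two_mul_mul_cos_pos hr ω
  have hquot := ((hasDerivAt_sin ω).const_mul r).div
    (((hasDerivAt_cos ω).const_mul r).const_sub 1) hD.ne'
  refine ((hasDerivAt_id ω).add (hquot.arctan.const_mul 2)).congr_deriv ?_
  simp only [Pi.div_apply]
  field_simp
  linear_combination -r ^ 2 * (2 - 2 * r * cos ω) * sin_sq_add_cos_sq ω

lemma integral_inv_one_add_sq_sub_two_mul_mul_cos {r : ℝ} (hr : |r| < 1) :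
    ∫ ω in (-π)..π, (1 + r ^ 2 - 2 * r * cos ω)⁻¹ = 2 * π / (1 - r ^ 2) := by
  have h1r : 0 < 1 - r ^ 2 := sub_pos.2 ((sq_lt_one_iff_abs_lt_one r).2 hr)
  have hderiv : ∀ ω ∈ Set.uIcc (-π) π,
      HasDerivAt (fun x => (x + 2 * arctan (r * sin x / (1 - r * cos x))) / (1 - r ^ 2))
        (1 + r ^ 2 - 2 * r * cos ω)⁻¹ ω := fun ω _ =>
    ((hasDerivAt_poisson_primitive hr ω).div_const _).congr_deriv <| by
      field_simp [(one_add_sq_sub_two_mul_mul_cos_pos hr ω).ne']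
  rw [integral_eq_sub_of_hasDerivAt hderiv
    ((continuous_inv_one_add_sq_sub_two_mul_mul_cos hr).intervalIntegrable _ _)]
  simp only [sin_neg, sin_pi, cos_neg, neg_zero, mul_zero, zero_div, arctan_zero]
  ring

lemma hasDerivAt_sin_div_one_add_sq_sub_two_mul_mul_cos {r : ℝ} (hr : |r| < 1) (ω : ℝ) :
    HasDerivAt (fun x => sin x / (1 + r ^ 2 - 2 * r * cos x))
      (((1 + r ^ 2) * cos ω - 2 * r) / (1 + r ^ 2 - 2 * r * cos ω) ^ 2) ω := by
  refine ((hasDerivAt_sin ω).div (((hasDerivAt_cos ω).const_mul (2 * r)).const_sub (1 + r ^ 2))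
    (one_add_sq_sub_two_mul_mul_cos_pos hr ω).ne').congr_deriv ?_
  linear_combination (-2 * r) * sin_sq_add_cos_sq ω / (1 + r ^ 2 - 2 * r * cos ω) ^ 2

lemma integral_two_mul_cos_sub_div_mul_of_ne {a b : ℝ} (ha : |a| < 1) (hb : |b| < 1)
    (hab : a ≠ b) :
    ∫ ω in (-π)..π, 2 * (cos ω - a) /
        ((1 + a ^ 2 - 2 * a * cos ω) * (1 + b ^ 2 - 2 * b * cos ω))
      = 4 * π * b / ((1 - a * b) * (1 - b ^ 2)) := by
  have hab' : a - b ≠ 0 := sub_ne_zero.mpr hab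
  have h1ab : 0 < 1 - a * b := sub_pos.2 <| (le_abs_self _).trans_lt <| by
    rw [abs_mul]; exact mul_lt_one_of_nonneg_of_lt_one_left (abs_nonneg a) ha hb.le
  have h1b : 0 < 1 - b ^ 2 := sub_pos.2 ((sq_lt_one_iff_abs_lt_one b).2 hb)
  have hsplit : ∀ ω, 2 * (cos ω - a) /
      ((1 + a ^ 2 - 2 * a * cos ω) * (1 + b ^ 2 - 2 * b * cos ω))
      = (1 - a ^ 2) / ((a - b) * (1 - a * b)) * (1 + a ^ 2 - 2 * a * cos ω)⁻¹
        - (1 - 2 * a * b + b ^ 2) / ((a - b) * (1 - a * b)) * (1 + b ^ 2 - 2 * b * cos ω)⁻¹ := by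
    intro ω
    have hPa := (one_add_sq_sub_two_mul_mul_cos_pos ha ω).ne'
    have hPb := (one_add_sq_sub_two_mul_mul_cos_pos hb ω).ne'
    generalize hp : 1 + a ^ 2 - 2 * a * cos ω = p at *
    generalize hq : 1 + b ^ 2 - 2 * b * cos ω = q at *
    field_simp
    rw [← hp, ← hq]
    ring
  simp_rw [hsplit]
  rw [integral_sub, integral_const_mul, integral_const_mul,
    integral_inv_one_add_sq_sub_two_mul_mul_cos ha, integral_inv_one_add_sq_sub_two_mul_mul_cos hb]
  · have h1a : 0 < 1 - a ^ 2 := sub_pos.2 ((sq_lt_one_iff_abs_lt_one a).2 ha)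
    field_simp
    ring
  all_goals
    exact ((continuous_inv_one_add_sq_sub_two_mul_mul_cos ‹_›).intervalIntegrable _ _).const_mul _

lemma integral_two_mul_cos_sub_div_mul_self {a : ℝ} (ha : |a| < 1) :
    ∫ ω in (-π)..π, 2 * (cos ω - a) /
        ((1 + a ^ 2 - 2 * a * cos ω) * (1 + a ^ 2 - 2 * a * cos ω))
      = 4 * π * a / (1 - a ^ 2) ^ 2 := by
  have h1a : 0 < 1 - a ^ 2 := sub_pos.2 ((sq_lt_one_iff_abs_lt_one a).2 ha)
  have hP ω := (one_add_sq_sub_two_mul_mul_cos_pos ha ω).ne'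
  set G' : ℝ → ℝ := fun ω => ((1 + a ^ 2) * cos ω - 2 * a) / (1 + a ^ 2 - 2 * a * cos ω) ^ 2
  have hG' : Continuous G' :=
    Continuous.div (by fun_prop) (by fun_prop) fun ω => pow_ne_zero 2 (hP ω)
  have hintG' : ∫ ω in (-π)..π, G' ω = 0 := by
    rw [integral_eq_sub_of_hasDerivAt
      (fun ω _ => hasDerivAt_sin_div_one_add_sq_sub_two_mul_mul_cos ha ω) (hG'.intervalIntegrable _ _)]
    simp
  have hsplit : ∀ ω, 2 * (cos ω - a) /
      ((1 + a ^ 2 - 2 * a * cos ω) * (1 + a ^ 2 - 2 * a * cos ω))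
      = 2 / (1 - a ^ 2) * G' ω + 2 * a / (1 - a ^ 2) * (1 + a ^ 2 - 2 * a * cos ω)⁻¹ := by
    intro ω
    have hPω := hP ω
    simp only [G']
    generalize hp : 1 + a ^ 2 - 2 * a * cos ω = p at *
    field_simp
    rw [← hp]
    ring
  simp_rw [hsplit]
  rw [integral_add, integral_const_mul, integral_const_mul, hintG',
    integral_inv_one_add_sq_sub_two_mul_mul_cos ha]
  · field_simp
    ring
  · exact (hG'.intervalIntegrable _ _).const_mul _
  · exact ((continuous_inv_one_add_sq_sub_two_mul_mul_cos ha).intervalIntegrable _ _).const_mul _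

theorem projection_coefficient (a b : ℝ) (ha : |a| < 1) (hb : |b| < 1) :
    (1 / (2 * π)) *
      ∫ ω in (-π)..π,
        2 * (Real.cos ω - a) /
          ((1 + a ^ 2 - 2 * a * Real.cos ω) * (1 + b ^ 2 - 2 * b * Real.cos ω))
      = 2 * b / ((1 - a * b) * (1 - b ^ 2)) := by
  rcases eq_or_ne a b with rfl | hab
  · rw [integral_two_mul_cos_sub_div_mul_self ha]
    field_simp
    ring
  · rw [integral_two_mul_cos_sub_div_mul_of_ne ha hb hab]
    field_simp
    ring
end

section
/- Let |a| < 1, |b| < 1 be real. Define h(ω) = 1/P_b(ω), ẽ₁ = 1, ẽ₂(ω) = 2(cos ω − a)/P_a(ω), with the normalized inner product ⟨f,g⟩ = (1/2π)∫_{−π}^{π} f g dω. Then the squared norm of the orthogonal residual R = h − ⟨h,ẽ₁⟩ẽ₁/‖ẽ₁‖² − ⟨h,ẽ₂⟩ẽ₂/‖ẽ₂‖² equals 2b²(a − b)² / [(1 − b²)³ (1 − ab)²]. -/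
/-!
Since `⟨ẽ₁, ẽ₂⟩ = 0`, expanding the residual gives
`‖R‖² = ‖h‖² - ⟨h, ẽ₁⟩² / ‖ẽ₁‖² - ⟨h, ẽ₂⟩² / ‖ẽ₂‖²`, so everything reduces to integrals of
rational functions of `cos ω` over a period. These follow from two primitives,
`ω + 2 arctan (c sin ω / (1 - c cos ω))` of `(1 - c²) / P_c` (smooth on all of `ℝ` because
`1 - c cos ω > 0`, unlike the usual primitive through `tan (ω / 2)`) and `sin ω / P_c`, of
derivative `((1 + c²) cos ω - 2c) / P_c²`, together with the partial fraction identities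
`a P_b - b P_a = (a - b)(1 - a b)` and `2a (cos ω - a) = (1 - a²) - P_a`.
-/

open Real

/-- Normalized inner product on `[-π, π]`. -/
noncomputable def nip (f g : ℝ → ℝ) : ℝ :=
  (1 / (2 * π)) * ∫ ω in (-π)..π, f ω * g ω

/-- AR(1) spectral factor. -/
noncomputable def Pker (c ω : ℝ) : ℝ := 1 + c ^ 2 - 2 * c * Real.cos ω

open intervalIntegral

lemma nip_comm (f g : ℝ → ℝ) : nip f g = nip g f := by
  simp only [nip, mul_comm (f _)]

lemma nip_sub_mul_sub_mul_left {f u v k : ℝ → ℝ} (hf : Continuous f) (hu : Continuous u)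
    (hv : Continuous v) (hk : Continuous k) (c₁ c₂ : ℝ) :
    nip (fun ω => f ω - c₁ * u ω - c₂ * v ω) k = nip f k - c₁ * nip u k - c₂ * nip v k := by
  simp only [nip, sub_mul, mul_assoc]
  rw [integral_sub, integral_sub, integral_const_mul, integral_const_mul]
  · ring
  all_goals
    apply Continuous.intervalIntegrable
    fun_prop

lemma nip_sub_mul_sub_mul_right {f u v k : ℝ → ℝ} (hf : Continuous f) (hu : Continuous u)
    (hv : Continuous v) (hk : Continuous k) (c₁ c₂ : ℝ) :
    nip k (fun ω => f ω - c₁ * u ω - c₂ * v ω) = nip k f - c₁ * nip k u - c₂ * nip k v := by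
  simp only [nip_comm k]
  exact nip_sub_mul_sub_mul_left hf hu hv hk c₁ c₂

theorem nip_orthogonal_residual {f u v : ℝ → ℝ} (hf : Continuous f) (hu : Continuous u)
    (hv : Continuous v) (huv : nip u v = 0) :
    nip (fun ω => f ω - nip f u / nip u u * u ω - nip f v / nip v v * v ω)
        (fun ω => f ω - nip f u / nip u u * u ω - nip f v / nip v v * v ω)
      = nip f f - nip f u ^ 2 / nip u u - nip f v ^ 2 / nip v v := by
  have hR : Continuous fun ω => f ω - nip f u / nip u u * u ω - nip f v / nip v v * v ω := by
    fun_prop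
  have hsq (x y : ℝ) : (x / y) ^ 2 * y = x ^ 2 / y := by
    rcases eq_or_ne y 0 with rfl | hy
    · simp
    · field_simp
  rw [nip_sub_mul_sub_mul_left hf hu hv hR, nip_sub_mul_sub_mul_right hf hu hv hf,
    nip_sub_mul_sub_mul_right hf hu hv hu, nip_sub_mul_sub_mul_right hf hu hv hv,
    nip_comm u f, nip_comm v f, nip_comm v u, huv]
  linear_combination hsq (nip f u) (nip u u) + hsq (nip f v) (nip v v)

section Pker

variable {a b c : ℝ}

@[fun_prop]
lemma continuous_pker (c : ℝ) : Continuous (Pker c) := by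
  unfold Pker
  fun_prop

lemma pker_eq_sq_add_sq (c ω : ℝ) : Pker c ω = (1 - c * cos ω) ^ 2 + (c * sin ω) ^ 2 := by
  rw [Pker]
  linear_combination (-c ^ 2) * sin_sq_add_cos_sq ω

lemma one_sub_mul_cos_pos (hc : |c| < 1) (ω : ℝ) : 0 < 1 - c * cos ω := by
  have : c * cos ω < 1 :=
    calc c * cos ω ≤ |c| * |cos ω| := (le_abs_self _).trans (abs_mul _ _).le
      _ ≤ |c| := mul_le_of_le_one_right (abs_nonneg c) (abs_cos_le_one ω)
      _ < 1 := hc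
  linarith

lemma pker_pos (hc : |c| < 1) (ω : ℝ) : 0 < Pker c ω := by
  rw [pker_eq_sq_add_sq]
  exact add_pos_of_pos_of_nonneg (pow_pos (one_sub_mul_cos_pos hc ω) 2) (sq_nonneg _)

lemma pker_ne_zero (hc : |c| < 1) (ω : ℝ) : Pker c ω ≠ 0 :=
  (pker_pos hc ω).ne'

lemma one_sub_sq_pos (hc : |c| < 1) : 0 < 1 - c ^ 2 :=
  sub_pos.2 (sq_lt_one_iff_abs_lt_one c |>.2 hc)

lemma one_sub_mul_pos (ha : |a| < 1) (hb : |b| < 1) : 0 < 1 - a * b := by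
  have : a * b < 1 :=
    calc a * b ≤ |a| * |b| := (le_abs_self _).trans (abs_mul _ _).le
      _ < 1 := mul_lt_one_of_nonneg_of_lt_one_left (abs_nonneg a) ha hb.le
  linarith

lemma hasDerivAt_pker (c ω : ℝ) : HasDerivAt (Pker c) (2 * c * sin ω) ω :=
  (((hasDerivAt_cos ω).const_mul (2 * c)).const_sub (1 + c ^ 2)).congr_deriv (by ring)

lemma hasDerivAt_arctan_pker (hc : |c| < 1) (ω : ℝ) :
    HasDerivAt (fun ω => arctan (c * sin ω / (1 - c * cos ω)))
      (c * ((cos ω - c) / Pker c ω)) ω := by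
  have hd := (one_sub_mul_cos_pos hc ω).ne'
  have hP := pker_ne_zero hc ω
  refine (((hasDerivAt_sin ω).const_mul c).div
    (((hasDerivAt_cos ω).const_mul c).const_sub 1) hd).arctan.congr_deriv ?_
  simp only [Pi.div_apply]
  rw [pker_eq_sq_add_sq] at hP ⊢
  field_simp
  linear_combination (-c ^ 2) * sin_sq_add_cos_sq ω

lemma hasDerivAt_sin_div_pker (hc : |c| < 1) (ω : ℝ) :
    HasDerivAt (fun ω => sin ω / Pker c ω) (((1 + c ^ 2) * cos ω - 2 * c) / Pker c ω ^ 2) ω := by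
  have hP := pker_ne_zero hc ω
  refine ((hasDerivAt_sin ω).div (hasDerivAt_pker c ω) hP).congr_deriv ?_
  field_simp
  rw [Pker]
  linear_combination (-2 * c) * sin_sq_add_cos_sq ω

lemma integral_cos_sub_div_pker (hc : |c| < 1) :
    ∫ ω in (-π)..π, (cos ω - c) / Pker c ω = 0 := by
  rcases eq_or_ne c 0 with rfl | hc0
  · simp [Pker, integral_cos]
  have h : ∫ ω in (-π)..π, c * ((cos ω - c) / Pker c ω) = 0 := by
    rw [integral_eq_sub_of_hasDerivAt (fun ω _ => hasDerivAt_arctan_pker hc ω)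
      (Continuous.intervalIntegrable
        (by fun_prop (disch := simp [pker_ne_zero, hc])) _ _)]
    simp
  rw [integral_const_mul] at h
  exact (mul_eq_zero.1 h).resolve_left hc0

lemma integral_one_div_pker (hc : |c| < 1) :
    ∫ ω in (-π)..π, 1 / Pker c ω = 2 * π / (1 - c ^ 2) := by
  have h1 := (one_sub_sq_pos hc).ne'
  have hF (ω : ℝ) : HasDerivAt
      (fun ω => (ω + 2 * arctan (c * sin ω / (1 - c * cos ω))) / (1 - c ^ 2)) (1 / Pker c ω) ω := by
    refine (((hasDerivAt_id ω).add ((hasDerivAt_arctan_pker hc ω).const_mul 2)).div_const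
      _).congr_deriv ?_
    have hP := pker_ne_zero hc ω
    field_simp
    rw [Pker]
    ring
  rw [integral_eq_sub_of_hasDerivAt (fun ω _ => hF ω) (Continuous.intervalIntegrable
    (by fun_prop (disch := simp [pker_ne_zero, hc])) _ _)]
  simp only [sin_pi, mul_zero, cos_pi, mul_neg, mul_one, sub_neg_eq_add, zero_div, arctan_zero,
    add_zero, sin_neg, neg_zero, cos_neg]
  ring

lemma integral_one_div_pker_sq (hc : |c| < 1) :
    ∫ ω in (-π)..π, 1 / Pker c ω ^ 2 = 2 * π * (1 + c ^ 2) / (1 - c ^ 2) ^ 3 := by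
  have h1 := (one_sub_sq_pos hc).ne'
  have hF (ω : ℝ) : HasDerivAt (fun ω => 2 * c / (1 - c ^ 2) ^ 2 * (sin ω / Pker c ω)
      + (1 + c ^ 2) / (1 - c ^ 2) ^ 3 * (ω + 2 * arctan (c * sin ω / (1 - c * cos ω))))
      (1 / Pker c ω ^ 2) ω := by
    refine (((hasDerivAt_sin_div_pker hc ω).const_mul _).add
      (((hasDerivAt_id ω).add ((hasDerivAt_arctan_pker hc ω).const_mul 2)).const_mul
        _)).congr_deriv ?_
    have hP := pker_ne_zero hc ω
    field_simp
    rw [Pker]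
    ring
  rw [integral_eq_sub_of_hasDerivAt (fun ω _ => hF ω) (Continuous.intervalIntegrable
    (by fun_prop (disch := simp [pker_ne_zero, hc])) _ _)]
  simp only [sin_pi, zero_div, mul_zero, cos_pi, mul_neg, mul_one, sub_neg_eq_add, arctan_zero,
    add_zero, zero_add, sin_neg, neg_zero, cos_neg]
  ring

lemma integral_one_div_pker_mul_one_div_pker (ha : |a| < 1) (hb : |b| < 1) :
    ∫ ω in (-π)..π, 1 / Pker a ω * (1 / Pker b ω)
      = 2 * π * (1 + a * b) / ((1 - a * b) * (1 - a ^ 2) * (1 - b ^ 2)) := by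
  have h1a := (one_sub_sq_pos ha).ne'
  have h1b := (one_sub_sq_pos hb).ne'
  have h1ab := (one_sub_mul_pos ha hb).ne'
  rcases eq_or_ne a b with rfl | hab
  · simp_rw [one_div_mul_one_div, ← sq, integral_one_div_pker_sq ha]
    field_simp
  have hsub := sub_ne_zero.2 hab
  have hsplit (ω : ℝ) : 1 / Pker a ω * (1 / Pker b ω)
      = (a * (1 / Pker a ω) - b * (1 / Pker b ω)) / ((a - b) * (1 - a * b)) := by
    have hPa := pker_ne_zero ha ω
    have hPb := pker_ne_zero hb ω
    field_simp
    rw [Pker, Pker]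
    ring
  simp_rw [hsplit]
  rw [integral_div, integral_sub, integral_const_mul, integral_const_mul, integral_one_div_pker ha,
    integral_one_div_pker hb]
  · field_simp
    ring
  all_goals
    apply Continuous.intervalIntegrable
    fun_prop (disch := simp [pker_ne_zero, *])

lemma integral_one_div_pker_mul_cos_sub_div_pker (ha : |a| < 1) (hb : |b| < 1) :
    ∫ ω in (-π)..π, 1 / Pker b ω * (2 * (cos ω - a) / Pker a ω)
      = 4 * π * b / ((1 - b ^ 2) * (1 - a * b)) := by
  have h1b := (one_sub_sq_pos hb).ne'
  rcases eq_or_ne a 0 with rfl | ha0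
  · have hsplit (ω : ℝ) : 1 / Pker b ω * (2 * (cos ω - 0) / Pker 0 ω)
        = 2 * ((cos ω - b) / Pker b ω) + 2 * b * (1 / Pker b ω) := by
      have hPb := pker_ne_zero hb ω
      field_simp
      simp only [Pker]
      ring
    simp_rw [hsplit]
    rw [integral_add, integral_const_mul, integral_const_mul, integral_cos_sub_div_pker hb,
      integral_one_div_pker hb]
    · field_simp
      ring
    all_goals
      apply Continuous.intervalIntegrable
      fun_prop (disch := simp [pker_ne_zero, *])
  have h1a := (one_sub_sq_pos ha).ne'
  have h1ab := (one_sub_mul_pos ha hb).ne'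
  have hsplit (ω : ℝ) : 1 / Pker b ω * (2 * (cos ω - a) / Pker a ω)
      = ((1 - a ^ 2) * (1 / Pker a ω * (1 / Pker b ω)) - 1 / Pker b ω) / a := by
    have hPa := pker_ne_zero ha ω
    have hPb := pker_ne_zero hb ω
    field_simp
    rw [Pker]
    ring
  simp_rw [hsplit]
  rw [integral_div, integral_sub, integral_const_mul, integral_one_div_pker_mul_one_div_pker ha hb,
    integral_one_div_pker hb]
  · field_simp
    ring
  all_goals
    apply Continuous.intervalIntegrable
    fun_prop (disch := simp [pker_ne_zero, *])

lemma integral_cos_sub_div_pker_mul_self (ha : |a| < 1) :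
    ∫ ω in (-π)..π, 2 * (cos ω - a) / Pker a ω * (2 * (cos ω - a) / Pker a ω)
      = 4 * π / (1 - a ^ 2) := by
  rcases eq_or_ne a 0 with rfl | ha0
  · have hsplit (ω : ℝ) : 2 * (cos ω - 0) / Pker 0 ω * (2 * (cos ω - 0) / Pker 0 ω)
        = 4 * cos ω ^ 2 := by
      simp only [Pker]
      ring
    simp_rw [hsplit]
    rw [integral_const_mul, integral_cos_sq]
    simp
  have h1a := (one_sub_sq_pos ha).ne'
  have hsplit (ω : ℝ) : 2 * (cos ω - a) / Pker a ω * (2 * (cos ω - a) / Pker a ω)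
      = ((1 - a ^ 2) ^ 2 * (1 / Pker a ω ^ 2) - 2 * (1 - a ^ 2) * (1 / Pker a ω) + 1) / a ^ 2 := by
    have hPa := pker_ne_zero ha ω
    field_simp
    rw [Pker]
    ring
  simp_rw [hsplit]
  rw [integral_div, integral_add, integral_sub, integral_const_mul, integral_const_mul,
    integral_one_div_pker_sq ha, integral_one_div_pker ha, integral_const]
  · field_simp
    ring
  all_goals
    apply Continuous.intervalIntegrable
    fun_prop (disch := simp [pker_ne_zero, *])

lemma nip_one_one : nip (fun _ => 1) (fun _ => 1) = 1 := by
  simp only [nip, mul_one, integral_const, smul_eq_mul, sub_neg_eq_add]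
  field_simp
  ring

lemma nip_one_div_pker_one (hc : |c| < 1) :
    nip (fun ω => 1 / Pker c ω) (fun _ => 1) = 1 / (1 - c ^ 2) := by
  simp only [nip, mul_one, integral_one_div_pker hc]
  field_simp

lemma nip_one_div_pker_self (hc : |c| < 1) :
    nip (fun ω => 1 / Pker c ω) (fun ω => 1 / Pker c ω) = (1 + c ^ 2) / (1 - c ^ 2) ^ 3 := by
  simp_rw [nip, one_div_mul_one_div, ← sq, integral_one_div_pker_sq hc]
  field_simp

lemma nip_one_cos_sub_div_pker (ha : |a| < 1) :
    nip (fun _ => 1) (fun ω => 2 * (cos ω - a) / Pker a ω) = 0 := by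
  simp only [nip, one_mul, mul_div_assoc, integral_const_mul, integral_cos_sub_div_pker ha,
    mul_zero]

lemma nip_one_div_pker_cos_sub_div_pker (ha : |a| < 1) (hb : |b| < 1) :
    nip (fun ω => 1 / Pker b ω) (fun ω => 2 * (cos ω - a) / Pker a ω)
      = 2 * b / ((1 - b ^ 2) * (1 - a * b)) := by
  simp only [nip, integral_one_div_pker_mul_cos_sub_div_pker ha hb]
  field_simp
  ring

lemma nip_cos_sub_div_pker_self (ha : |a| < 1) :
    nip (fun ω => 2 * (cos ω - a) / Pker a ω) (fun ω => 2 * (cos ω - a) / Pker a ω)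
      = 2 / (1 - a ^ 2) := by
  simp only [nip, integral_cos_sub_div_pker_mul_self ha]
  field_simp
  ring

end Pker

theorem residual_norm_sq (a b : ℝ) (ha : |a| < 1) (hb : |b| < 1) :
    nip
      (fun ω =>
        (1 / Pker b ω)
          - (nip (fun ω => 1 / Pker b ω) (fun _ => 1) / nip (fun _ => 1) (fun _ => 1)) * 1
          - (nip (fun ω => 1 / Pker b ω) (fun ω => 2 * (Real.cos ω - a) / Pker a ω) /
              nip (fun ω => 2 * (Real.cos ω - a) / Pker a ω)
                  (fun ω => 2 * (Real.cos ω - a) / Pker a ω))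
            * (2 * (Real.cos ω - a) / Pker a ω))
      (fun ω =>
        (1 / Pker b ω)
          - (nip (fun ω => 1 / Pker b ω) (fun _ => 1) / nip (fun _ => 1) (fun _ => 1)) * 1
          - (nip (fun ω => 1 / Pker b ω) (fun ω => 2 * (Real.cos ω - a) / Pker a ω) /
              nip (fun ω => 2 * (Real.cos ω - a) / Pker a ω)
                  (fun ω => 2 * (Real.cos ω - a) / Pker a ω))
            * (2 * (Real.cos ω - a) / Pker a ω))
      = 2 * b ^ 2 * (a - b) ^ 2 / ((1 - b ^ 2) ^ 3 * (1 - a * b) ^ 2) := by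
  have hh : Continuous fun ω => 1 / Pker b ω := by fun_prop (disch := simp [pker_ne_zero, hb])
  have he : Continuous fun ω => 2 * (cos ω - a) / Pker a ω := by
    fun_prop (disch := simp [pker_ne_zero, ha])
  rw [nip_orthogonal_residual hh continuous_const he (nip_one_cos_sub_div_pker ha),
    nip_one_div_pker_self hb, nip_one_div_pker_one hb, nip_one_one,
    nip_one_div_pker_cos_sub_div_pker ha hb, nip_cos_sub_div_pker_self ha]
  have h1a := (one_sub_sq_pos ha).ne'
  have h1b := (one_sub_sq_pos hb).ne'
  have h1ba := (one_sub_mul_pos hb ha).ne'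
  field_simp
  ring
end
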